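/- For the linear functional Λ determined on polynomials by Λ(H_n(x,s,q)) = δ_{n,0}, one has the orthogonality relation Λ(H_n(x,s,q)·H_m(x,s,q)) = q^{binom(n+1,2)} s^n [n]_q! δ_{n,m}. -/

import Mathlib

noncomputable section

/-- The q-integer `[n]_q = (1 - q^n)/(1 - q)`. -/
def qnat (q : ℝ) (n : ℕ) : ℝ := (1 - q ^ n) / (1 - q)

/-- The q-factorial `[n]_q!`. -/
def qfac (q : ℝ) (n : ℕ) : ℝ := ∏ j ∈ Finset.range n, qnat q (j + 1)

/-- The Gaussian binomial coefficient. -/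
def qbinom (q : ℝ) (n k : ℕ) : ℝ := qfac q n / (qfac q k * qfac q (n - k))

/-- The odd q-double factorial `[2k-1]_q!! = [1]_q [3]_q ⋯ [2k-1]_q`. -/
def qdf (q : ℝ) (k : ℕ) : ℝ := ∏ i ∈ Finset.range k, qnat q (2 * i + 1)

/-- The bivariate q-Hermite polynomial
`H n (x,s,q) = ∑_{2k ≤ n} (-s)^k q^(k²) qbinom(n,2k) [2k-1]_q!! x^(n-2k)`. -/
def qHermite (q s : ℝ) (n : ℕ) (x : ℝ) : ℝ :=
  ∑ k ∈ Finset.range (n / 2 + 1),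
    (-s) ^ k * q ^ (k ^ 2) * qbinom q n (2 * k) * qdf q k * x ^ (n - 2 * k)

end

open Polynomial in
/-- The q-Hermite polynomial as an element of `ℝ[X]` (variable `x`). -/
noncomputable def qHermitePoly (q s : ℝ) (n : ℕ) : Polynomial ℝ :=
  ∑ k ∈ Finset.range (n / 2 + 1),
    C ((-s) ^ k * q ^ (k ^ 2) * qbinom q n (2 * k) * qdf q k) * X ^ (n - 2 * k)

/-!
The polynomials `H n = qHermitePoly q s n` are monic of degree `n` and satisfy the three-term
recurrence `X * H (n + 1) = H (n + 2) + s q^(n+1) [n+1]_q * H n`; comparing coefficients, this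
is the q-Pascal rule combined with the absorption identity
`[k+1]_q qbinom(n+1, k+1) = [n+1]_q qbinom(n, k)`.
For any such family, moving one factor `X` at a time onto `H n` with the recurrence shows
`Λ (X^j * H n) = 0` for `j < n` and `Λ (X^n * H n) = ∏_{i<n} s q^(i+1) [i+1]_q`; writing
`H m = X^m + (lower terms)` gives the orthogonality relation.
-/

open Polynomial

namespace Polynomial

variable {R : Type*} [CommRing R] {P : ℕ → R[X]} {b : ℕ → R} {Λ : R[X] →ₗ[R] R}

theorem apply_X_pow_mul_eq_zero_of_lt
    (hrec : ∀ m, X * P (m + 1) = P (m + 2) + C (b m) * P m)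
    (hΛ : ∀ n, Λ (P n) = if n = 0 then 1 else 0) :
    ∀ {j n : ℕ}, j < n → Λ (X ^ j * P n) = 0
  | 0, n, hn => by rw [pow_zero, one_mul, hΛ, if_neg hn.ne']
  | j + 1, m + 1, hj => by
    rw [pow_succ, mul_assoc, hrec, mul_add, map_add, mul_left_comm, ← smul_eq_C_mul, map_smul,
      apply_X_pow_mul_eq_zero_of_lt hrec hΛ (by omega),
      apply_X_pow_mul_eq_zero_of_lt hrec hΛ (by omega), smul_zero, add_zero]

theorem apply_X_pow_mul_self
    (hrec : ∀ m, X * P (m + 1) = P (m + 2) + C (b m) * P m)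
    (hΛ : ∀ n, Λ (P n) = if n = 0 then 1 else 0) :
    ∀ n, Λ (X ^ n * P n) = ∏ i ∈ Finset.range n, b i
  | 0 => by simp [hΛ]
  | n + 1 => by
    rw [pow_succ, mul_assoc, hrec, mul_add, map_add, mul_left_comm, ← smul_eq_C_mul, map_smul,
      apply_X_pow_mul_eq_zero_of_lt hrec hΛ (by omega), apply_X_pow_mul_self hrec hΛ n,
      Finset.prod_range_succ, smul_eq_mul, zero_add, mul_comm]

theorem apply_mul_eq_zero_of_mem_degreeLT
    (hrec : ∀ m, X * P (m + 1) = P (m + 2) + C (b m) * P m)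
    (hΛ : ∀ n, Λ (P n) = if n = 0 then 1 else 0) {n : ℕ} {Q : R[X]}
    (hQ : Q ∈ degreeLT R n) :
    Λ (Q * P n) = 0 := by
  classical
  suffices degreeLT R n ≤ LinearMap.ker (Λ ∘ₗ LinearMap.mulRight R (P n)) from this hQ
  rw [degreeLT_eq_span_X_pow, Submodule.span_le]
  simp only [Finset.coe_image, Set.image_subset_iff]
  intro j hj
  exact apply_X_pow_mul_eq_zero_of_lt hrec hΛ (Finset.mem_range.mp hj)

theorem apply_mul_eq_ite
    (hmonic : ∀ n, P n - X ^ n ∈ degreeLT R n)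
    (hrec : ∀ m, X * P (m + 1) = P (m + 2) + C (b m) * P m)
    (hΛ : ∀ n, Λ (P n) = if n = 0 then 1 else 0) (n m : ℕ) :
    Λ (P n * P m) = if n = m then ∏ i ∈ Finset.range n, b i else 0 := by
  wlog hnm : m ≤ n generalizing n m
  · rw [mul_comm, this m n (by omega)]
    simp only [eq_comm]
    split_ifs with h <;> simp [h]
  have hP : ∀ k, P k = (P k - X ^ k) + X ^ k := fun k => (sub_add_cancel _ _).symm
  rcases hnm.lt_or_eq with hlt | rfl
  · rw [if_neg hlt.ne', mul_comm]
    refine apply_mul_eq_zero_of_mem_degreeLT hrec hΛ ?_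
    rw [hP m]
    exact add_mem (degreeLT_mono hlt.le (hmonic m))
      (mem_degreeLT.mpr ((degree_X_pow_le m).trans_lt (by exact_mod_cast hlt)))
  · rw [if_pos rfl]
    nth_rw 1 [hP m]
    rw [add_mul, map_add, apply_mul_eq_zero_of_mem_degreeLT hrec hΛ (hmonic m), zero_add,
      apply_X_pow_mul_self hrec hΛ]

end Polynomial

section QCalculus

variable {q : ℝ}

theorem qnat_add (q : ℝ) (m n : ℕ) : qnat q (m + n) = qnat q m + q ^ m * qnat q n := by
  simp only [qnat, pow_add]
  ring

theorem qnat_succ_pos (hq : 0 ≤ q) (hq1 : q < 1) (n : ℕ) : 0 < qnat q (n + 1) :=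
  div_pos (sub_pos.mpr (pow_lt_one₀ hq hq1 n.succ_ne_zero)) (sub_pos.mpr hq1)

theorem qfac_zero (q : ℝ) : qfac q 0 = 1 := Finset.prod_range_zero _

theorem qfac_succ (q : ℝ) (n : ℕ) : qfac q (n + 1) = qfac q n * qnat q (n + 1) :=
  Finset.prod_range_succ _ _

theorem qfac_pos (hq : 0 ≤ q) (hq1 : q < 1) (n : ℕ) : 0 < qfac q n :=
  Finset.prod_pos fun i _ => qnat_succ_pos hq hq1 i

theorem qdf_zero (q : ℝ) : qdf q 0 = 1 := Finset.prod_range_zero _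

theorem qdf_succ (q : ℝ) (k : ℕ) : qdf q (k + 1) = qdf q k * qnat q (2 * k + 1) :=
  Finset.prod_range_succ _ _

theorem qbinom_zero_right (hq : 0 ≤ q) (hq1 : q < 1) (n : ℕ) : qbinom q n 0 = 1 := by
  rw [qbinom, qfac_zero, Nat.sub_zero, one_mul, div_self (qfac_pos hq hq1 n).ne']

theorem qbinom_self (hq : 0 ≤ q) (hq1 : q < 1) (n : ℕ) : qbinom q n n = 1 := by
  rw [qbinom, Nat.sub_self, qfac_zero, mul_one, div_self (qfac_pos hq hq1 n).ne']

theorem qbinom_succ_succ (hq : 0 ≤ q) (hq1 : q < 1) {n k : ℕ} (hkn : k < n) :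
    qbinom q (n + 1) (k + 1) = qbinom q n (k + 1) + q ^ (n - k) * qbinom q n k := by
  obtain ⟨d, rfl⟩ := Nat.exists_eq_add_of_lt hkn
  have hsub₁ : k + d + 1 + 1 - (k + 1) = d + 1 := by omega
  have hsub₂ : k + d + 1 - (k + 1) = d := by omega
  have hsub₃ : k + d + 1 - k = d + 1 := by omega
  have hqnat : qnat q (k + d + 1 + 1) = qnat q (d + 1) + q ^ (d + 1) * qnat q (k + 1) := by
    rw [← qnat_add]; congr 1; omega
  simp only [qbinom, hsub₁, hsub₂, hsub₃, qfac_succ, hqnat]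
  have hfk := (qfac_pos hq hq1 k).ne'
  have hfd := (qfac_pos hq hq1 d).ne'
  have hnk := (qnat_succ_pos hq hq1 k).ne'
  have hnd := (qnat_succ_pos hq hq1 d).ne'
  field_simp

theorem qnat_mul_qbinom_succ_succ (hq : 0 ≤ q) (hq1 : q < 1) {n k : ℕ} (hkn : k ≤ n) :
    qnat q (k + 1) * qbinom q (n + 1) (k + 1) = qnat q (n + 1) * qbinom q n k := by
  have hsub : n + 1 - (k + 1) = n - k := by omega
  rw [qbinom, qbinom, hsub, qfac_succ, qfac_succ]
  have hnk := (qnat_succ_pos hq hq1 k).ne'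
  field_simp

end QCalculus

theorem prod_range_mul_pow_succ_mul_qnat_succ (q s : ℝ) (n : ℕ) :
    ∏ i ∈ Finset.range n, s * q ^ (i + 1) * qnat q (i + 1)
      = q ^ ((n + 1).choose 2) * s ^ n * qfac q n := by
  induction n with
  | zero => simp [qfac_zero]
  | succ n ih =>
    rw [Finset.prod_range_succ, ih, Nat.choose_succ_succ (n + 1), Nat.choose_one_right, pow_add,
      qfac_succ]
    ring

/-- The coefficient of `X ^ (n - 2 * k)` in `qHermitePoly q s n`; unlike the summand in the
definition it vanishes for `2 * k > n`. -/
noncomputable def qHermiteCoeff (q s : ℝ) (n k : ℕ) : ℝ :=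
  if 2 * k ≤ n then (-s) ^ k * q ^ (k ^ 2) * qbinom q n (2 * k) * qdf q k else 0

noncomputable def qHermiteTerm (q s : ℝ) (n k : ℕ) : ℝ[X] :=
  C (qHermiteCoeff q s n k) * X ^ (n - 2 * k)

theorem qHermitePoly_eq_sum_range (q s : ℝ) {n M : ℕ} (hM : n / 2 < M) :
    qHermitePoly q s n = ∑ k ∈ Finset.range M, qHermiteTerm q s n k := by
  have hrange : Finset.range (n / 2 + 1) ⊆ Finset.range M := Finset.range_subset_range.mpr hM
  rw [qHermitePoly, ← Finset.sum_subset hrange]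
  · refine Finset.sum_congr rfl fun k hk => ?_
    rw [qHermiteTerm, qHermiteCoeff, if_pos (by simp at hk; omega)]
  · intro k _ hk
    rw [qHermiteTerm, qHermiteCoeff, if_neg (by simp at hk; omega), C_0, zero_mul]

section Recurrence

variable {q : ℝ} (hq : 0 ≤ q) (hq1 : q < 1) (s : ℝ)
include hq hq1

theorem qHermiteTerm_zero (n : ℕ) : qHermiteTerm q s n 0 = X ^ n := by
  simp [qHermiteTerm, qHermiteCoeff, qbinom_zero_right hq hq1, qdf_zero]

theorem qHermiteCoeff_succ_succ_of_lt {n k : ℕ} (hkn : 2 * k < n) :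
    qHermiteCoeff q s (n + 2) (k + 1)
      = qHermiteCoeff q s (n + 1) (k + 1)
        - s * q ^ (n + 1) * qnat q (n + 1) * qHermiteCoeff q s n k := by
  have hpascal : qbinom q (n + 2) (2 * (k + 1))
      = qbinom q (n + 1) (2 * (k + 1)) + q ^ (n - 2 * k) * qbinom q (n + 1) (2 * k + 1) := by
    rw [mul_add, mul_one, qbinom_succ_succ hq hq1 (by omega : 2 * k + 1 < n + 1)]
    congr 3
    omega
  have habsorb := qnat_mul_qbinom_succ_succ hq hq1 hkn.le
  have hpow : q ^ ((k + 1) ^ 2) * q ^ (n - 2 * k) = q ^ (k ^ 2) * q ^ (n + 1) := by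
    rw [← pow_add, ← pow_add]
    congr 1
    zify [hkn.le]
    ring
  rw [qHermiteCoeff, qHermiteCoeff, qHermiteCoeff, if_pos (by omega), if_pos (by omega),
    if_pos hkn.le, hpascal, qdf_succ]
  linear_combination (-s) ^ (k + 1) * qdf q k *
    (qnat q (2 * k + 1) * qbinom q (n + 1) (2 * k + 1) * hpow + q ^ (k ^ 2) * q ^ (n + 1) * habsorb)

theorem qHermiteCoeff_two_mul_add_two (k : ℕ) :
    qHermiteCoeff q s (2 * k + 2) (k + 1)
      = -(s * q ^ (2 * k + 1) * qnat q (2 * k + 1) * qHermiteCoeff q s (2 * k) k) := by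
  rw [qHermiteCoeff, qHermiteCoeff, if_pos (by omega), if_pos le_rfl, mul_add, mul_one,
    qbinom_self hq hq1, qbinom_self hq hq1, qdf_succ]
  ring

theorem qHermiteTerm_succ_succ (n k : ℕ) :
    qHermiteTerm q s (n + 2) (k + 1)
      = X * qHermiteTerm q s (n + 1) (k + 1)
        - C (s * q ^ (n + 1) * qnat q (n + 1)) * qHermiteTerm q s n k := by
  rcases lt_trichotomy (2 * k) n with hlt | rfl | hgt
  · rw [qHermiteTerm, qHermiteTerm, qHermiteTerm, qHermiteCoeff_succ_succ_of_lt hq hq1 s hlt,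
      show n + 2 - 2 * (k + 1) = n - 2 * k by omega,
      show n - 2 * k = n + 1 - 2 * (k + 1) + 1 by omega, pow_succ, C_sub, C_mul]
    ring
  · have hvanish : qHermiteCoeff q s (2 * k + 1) (k + 1) = 0 := if_neg (by omega)
    rw [qHermiteTerm, qHermiteTerm, qHermiteTerm, qHermiteCoeff_two_mul_add_two hq hq1 s, hvanish,
      C_neg, C_mul]
    simp only [C_0, zero_mul, mul_zero, Nat.sub_self, show 2 * k + 2 - 2 * (k + 1) = 0 by omega]
    ring
  · simp only [qHermiteTerm, qHermiteCoeff, if_neg (show ¬2 * (k + 1) ≤ n + 2 by omega),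
      if_neg (show ¬2 * (k + 1) ≤ n + 1 by omega), if_neg (show ¬2 * k ≤ n by omega), C_0,
      zero_mul, mul_zero, sub_zero]

theorem qHermitePoly_succ_succ (n : ℕ) :
    qHermitePoly q s (n + 2)
      = X * qHermitePoly q s (n + 1)
        - C (s * q ^ (n + 1) * qnat q (n + 1)) * qHermitePoly q s n := by
  rw [qHermitePoly_eq_sum_range q s (M := n / 2 + 2) (by omega),
    qHermitePoly_eq_sum_range q s (n := n + 1) (M := n / 2 + 2) (by omega),
    qHermitePoly_eq_sum_range q s (n := n) (M := n / 2 + 1) (by omega),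
    Finset.sum_range_succ', Finset.sum_range_succ' (qHermiteTerm q s (n + 1)),
    qHermiteTerm_zero hq hq1, qHermiteTerm_zero hq hq1]
  simp only [qHermiteTerm_succ_succ hq hq1 s, Finset.sum_sub_distrib, ← Finset.mul_sum]
  ring

theorem qHermitePoly_sub_X_pow_mem_degreeLT (n : ℕ) :
    qHermitePoly q s n - X ^ n ∈ degreeLT ℝ n := by
  rw [qHermitePoly_eq_sum_range q s (M := n / 2 + 1) (by omega), Finset.sum_range_succ',
    qHermiteTerm_zero hq hq1, add_sub_cancel_right]
  refine Submodule.sum_mem _ fun k hk => mem_degreeLT.mpr ?_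
  have hexp : n - 2 * (k + 1) < n := by
    have := Finset.mem_range.mp hk
    omega
  exact (degree_C_mul_X_pow_le _ _).trans_lt (by exact_mod_cast hexp)

end Recurrence

theorem qHermite_orthogonality (q : ℝ) (hq : 0 < q) (hq1 : q < 1) (s : ℝ)
    (Λ : Polynomial ℝ →ₗ[ℝ] ℝ)
    (hΛ : ∀ n : ℕ, Λ (qHermitePoly q s n) = if n = 0 then 1 else 0)
    (n m : ℕ) :
    Λ (qHermitePoly q s n * qHermitePoly q s m)
      = if n = m then q ^ ((n + 1).choose 2) * s ^ n * qfac q n else 0 := by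
  have hrec : ∀ k, X * qHermitePoly q s (k + 1)
      = qHermitePoly q s (k + 2) + C (s * q ^ (k + 1) * qnat q (k + 1)) * qHermitePoly q s k :=
    fun k => by rw [qHermitePoly_succ_succ hq.le hq1 s]; ring
  rw [apply_mul_eq_ite (qHermitePoly_sub_X_pow_mem_degreeLT hq.le hq1 s) hrec hΛ,
    prod_range_mul_pow_succ_mul_qnat_succ]
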